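/- Let (X, μ) be a measure space, let n > 0 be a real number, let j ≥ 1 be a natural number, and let ε > 0. Let f, g, h : X → ℝ be measurable functions with f(x) > 0, g(x) > 0, h(x) > 0 for all x, and suppose that the integrals ∫ f(x)^{-n} dμ, ∫ g(x)^{-n} dμ, ∫ h(x)^{-n} dμ are all finite and strictly positive. If f(x)^{1/j} ≥ g(x)^{1/j} + ε · h(x)^{1/j} for μ-almost every x ∈ X, then (∫_X f(x)^{-n} dμ(x))^{-1/(n j)} ≥ (∫_X g(x)^{-n} dμ(x))^{-1/(n j)} + ε · (∫_X h(x)^{-n} dμ(x))^{-1/(n j)}. -/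

import Mathlib

open MeasureTheory Real

/-!
For `p < 0` the functional `u ↦ (∫ u ^ p) ^ (1 / p)` is superadditive on positive functions (a
reverse Minkowski inequality). This comes from the convexity of `t ↦ t ^ p` on `(0, ∞)`: the
two-point bound `(x + y) ^ p ≤ a ^ (1 - p) * x ^ p + b ^ (1 - p) * y ^ p` (for `a + b = 1`),
integrated with `a : b = A : B`, where `A`, `B` are the values of the functional at the two
summands, has right-hand side exactly `(A + B) ^ p`. The theorem is the case `p = -n j` applied to
`g ^ (1 / j)`, `ε h ^ (1 / j)` and `f ^ (1 / j)`, whose `p`-th powers are `g ^ (-n)`,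
`ε ^ p h ^ (-n)` and `f ^ (-n)`.
-/

open Set in
theorem convexOn_rpow_of_nonpos {p : ℝ} (hp : p ≤ 0) :
    ConvexOn ℝ (Ioi 0) fun x : ℝ ↦ x ^ p := by
  have hlog : ConvexOn ℝ (Ioi 0) fun x ↦ p * log x := by
    simpa [smul_eq_mul] using strictConcaveOn_log_Ioi.concaveOn.neg.smul (neg_nonneg.2 hp)
  have himage : Convex ℝ ((fun x ↦ p * log x) '' Ioi 0) :=
    (isPreconnected_Ioi.image _
      ((continuousOn_log.mono fun _ hx ↦ ne_of_gt hx).const_smul p)).convex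
  refine ((convexOn_exp.subset (subset_univ _) himage).comp hlog
    (exp_monotone.monotoneOn _)).congr fun x hx ↦ ?_
  simp [rpow_def_of_pos (mem_Ioi.1 hx), mul_comm]

theorem mul_div_rpow_eq_rpow_one_sub_mul {r t : ℝ} (p : ℝ) (hr : 0 < r) (ht : 0 ≤ t) :
    r * (t / r) ^ p = r ^ (1 - p) * t ^ p := by
  rw [div_rpow ht hr.le, rpow_sub hr, rpow_one]
  field_simp

theorem add_rpow_le_of_nonpos {p x y a b : ℝ} (hp : p ≤ 0) (hx : 0 < x) (hy : 0 < y)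
    (ha : 0 < a) (hb : 0 < b) (hab : a + b = 1) :
    (x + y) ^ p ≤ a ^ (1 - p) * x ^ p + b ^ (1 - p) * y ^ p := by
  have h := (convexOn_rpow_of_nonpos hp).2 (div_pos hx ha) (div_pos hy hb) ha.le hb.le hab
  simp only [smul_eq_mul, mul_div_cancel₀ _ ha.ne', mul_div_cancel₀ _ hb.ne'] at h
  rwa [mul_div_rpow_eq_rpow_one_sub_mul p ha hx.le,
    mul_div_rpow_eq_rpow_one_sub_mul p hb hy.le] at h

theorem div_rpow_one_sub_mul_rpow {A S : ℝ} (p : ℝ) (hA : 0 < A) (hS : 0 ≤ S) :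
    (A / S) ^ (1 - p) * A ^ p = A / S ^ (1 - p) := by
  rw [div_rpow hA.le hS, div_mul_eq_mul_div, ← rpow_add hA, sub_add_cancel, rpow_one]

section ReverseMinkowski

variable {X : Type*} [MeasurableSpace X] {μ : Measure X} {p : ℝ} {u v w : X → ℝ}

theorem integral_rpow_le_rpow_add_of_neg (hp : p < 0) (hu : ∀ x, 0 < u x) (hv : ∀ x, 0 < v x)
    (hui : Integrable (fun x ↦ u x ^ p) μ) (hvi : Integrable (fun x ↦ v x ^ p) μ)
    (hU : 0 < ∫ x, u x ^ p ∂μ) (hV : 0 < ∫ x, v x ^ p ∂μ)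
    (huvw : ∀ᵐ x ∂μ, u x + v x ≤ w x) :
    ∫ x, w x ^ p ∂μ ≤ ((∫ x, u x ^ p ∂μ) ^ p⁻¹ + (∫ x, v x ^ p ∂μ) ^ p⁻¹) ^ p := by
  set A := (∫ x, u x ^ p ∂μ) ^ p⁻¹
  set B := (∫ x, v x ^ p ∂μ) ^ p⁻¹
  have hA : 0 < A := rpow_pos_of_pos hU _
  have hB : 0 < B := rpow_pos_of_pos hV _
  have hS : 0 < A + B := add_pos hA hB
  have hpoint : ∀ᵐ x ∂μ, w x ^ p ≤
      (A / (A + B)) ^ (1 - p) * u x ^ p + (B / (A + B)) ^ (1 - p) * v x ^ p := by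
    filter_upwards [huvw] with x hx
    refine (rpow_le_rpow_of_nonpos (add_pos (hu x) (hv x)) hx hp.le).trans ?_
    exact add_rpow_le_of_nonpos hp.le (hu x) (hv x) (div_pos hA hS) (div_pos hB hS)
      (by rw [← add_div, div_self hS.ne'])
  have hw : 0 ≤ᵐ[μ] fun x ↦ w x ^ p := by
    filter_upwards [huvw] with x hx
    exact rpow_nonneg ((add_pos (hu x) (hv x)).le.trans hx) _
  calc ∫ x, w x ^ p ∂μ
      ≤ ∫ x, (A / (A + B)) ^ (1 - p) * u x ^ p + (B / (A + B)) ^ (1 - p) * v x ^ p ∂μ :=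
        integral_mono_of_nonneg hw ((hui.const_mul _).add (hvi.const_mul _)) hpoint
    _ = (A / (A + B)) ^ (1 - p) * A ^ p + (B / (A + B)) ^ (1 - p) * B ^ p := by
      rw [integral_add (hui.const_mul _) (hvi.const_mul _), integral_const_mul,
        integral_const_mul, rpow_inv_rpow hU.le hp.ne, rpow_inv_rpow hV.le hp.ne]
    _ = (A + B) ^ p := by
      rw [div_rpow_one_sub_mul_rpow p hA hS.le, div_rpow_one_sub_mul_rpow p hB hS.le, ← add_div]
      conv_rhs => rw [← sub_sub_cancel 1 p, rpow_sub hS, rpow_one]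

theorem integral_rpow_inv_add_le_of_neg (hp : p < 0) (hu : ∀ x, 0 < u x) (hv : ∀ x, 0 < v x)
    (hui : Integrable (fun x ↦ u x ^ p) μ) (hvi : Integrable (fun x ↦ v x ^ p) μ)
    (hU : 0 < ∫ x, u x ^ p ∂μ) (hV : 0 < ∫ x, v x ^ p ∂μ) (hW : 0 < ∫ x, w x ^ p ∂μ)
    (huvw : ∀ᵐ x ∂μ, u x + v x ≤ w x) :
    (∫ x, u x ^ p ∂μ) ^ p⁻¹ + (∫ x, v x ^ p ∂μ) ^ p⁻¹ ≤ (∫ x, w x ^ p ∂μ) ^ p⁻¹ := by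
  have hS : 0 < (∫ x, u x ^ p ∂μ) ^ p⁻¹ + (∫ x, v x ^ p ∂μ) ^ p⁻¹ := by positivity
  calc _ = (((∫ x, u x ^ p ∂μ) ^ p⁻¹ + (∫ x, v x ^ p ∂μ) ^ p⁻¹) ^ p) ^ p⁻¹ :=
        (rpow_rpow_inv hS.le hp.ne).symm
    _ ≤ _ := rpow_le_rpow_of_nonpos hW
        (integral_rpow_le_rpow_add_of_neg hp hu hv hui hvi hU hV huvw) (inv_nonpos.2 hp.le)

end ReverseMinkowski

theorem affine_quermassintegral_brunn_minkowski_general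
    {X : Type*} [MeasurableSpace X] (μ : Measure X)
    (n : ℝ) (hn : 0 < n) (j : ℕ) (hj : 1 ≤ j) (ε : ℝ) (hε : 0 < ε)
    (f g h : X → ℝ)
    (hfpos : ∀ x, 0 < f x) (hgpos : ∀ x, 0 < g x) (hhpos : ∀ x, 0 < h x)
    (hgint : Integrable (fun x => g x ^ (-n)) μ)
    (hhint : Integrable (fun x => h x ^ (-n)) μ)
    (hfI : 0 < ∫ x, f x ^ (-n) ∂μ)
    (hgI : 0 < ∫ x, g x ^ (-n) ∂μ)
    (hhI : 0 < ∫ x, h x ^ (-n) ∂μ)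
    (hae : ∀ᵐ x ∂μ, f x ^ (1 / (j : ℝ)) ≥ g x ^ (1 / (j : ℝ)) + ε * h x ^ (1 / (j : ℝ))) :
    (∫ x, f x ^ (-n) ∂μ) ^ (-1 / (n * (j : ℝ))) ≥
      (∫ x, g x ^ (-n) ∂μ) ^ (-1 / (n * (j : ℝ))) +
        ε * (∫ x, h x ^ (-n) ∂μ) ^ (-1 / (n * (j : ℝ))) := by
  have hj₀ : (0 : ℝ) < j := by exact_mod_cast hj
  set p : ℝ := -(n * j)
  have hp : p < 0 := neg_neg_of_pos (by positivity)
  have hexp : -1 / (n * (j : ℝ)) = p⁻¹ := by rw [neg_div, inv_neg, one_div]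
  have hpow : ∀ φ : X → ℝ, (∀ x, 0 < φ x) →
      (fun x ↦ (φ x ^ (1 / (j : ℝ))) ^ p) = fun x ↦ φ x ^ (-n) := fun φ hφ ↦ by
    funext x
    rw [← rpow_mul (hφ x).le]
    congr 1
    show 1 / (j : ℝ) * -(n * j) = -n
    field_simp
  have hεh : (fun x ↦ (ε * h x ^ (1 / (j : ℝ))) ^ p) = fun x ↦ ε ^ p * h x ^ (-n) := by
    funext x
    rw [mul_rpow hε.le (rpow_nonneg (hhpos x).le _), congrFun (hpow h hhpos) x]
  have hreverse := integral_rpow_inv_add_le_of_neg (μ := μ) hp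
    (u := fun x ↦ g x ^ (1 / (j : ℝ))) (v := fun x ↦ ε * h x ^ (1 / (j : ℝ)))
    (w := fun x ↦ f x ^ (1 / (j : ℝ)))
    (fun x ↦ rpow_pos_of_pos (hgpos x) _) (fun x ↦ mul_pos hε (rpow_pos_of_pos (hhpos x) _))
    (by rw [hpow g hgpos]; exact hgint) (by rw [hεh]; exact hhint.const_mul _)
    (by rw [hpow g hgpos]; exact hgI) (by rw [hεh, integral_const_mul]; positivity)
    (by rw [hpow f hfpos]; exact hfI) hae
  rw [hpow f hfpos, hpow g hgpos, hεh, integral_const_mul,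
    mul_rpow (rpow_nonneg hε.le _) hhI.le, rpow_rpow_inv hε.le hp.ne] at hreverse
  rw [hexp]
  exact hreverse

/-- Analytic core of the Brunn–Minkowski inequality for affine
quermassintegrals: if `f x ^ (1/j) ≥ g x ^ (1/j) + ε * h x ^ (1/j)` a.e., then
`(∫ f ^ (-n))^(-1/(n j)) ≥ (∫ g ^ (-n))^(-1/(n j)) + ε * (∫ h ^ (-n))^(-1/(n j))`. -/
theorem affine_quermassintegral_brunn_minkowski
    {X : Type*} [MeasurableSpace X] (μ : Measure X)
    (n : ℝ) (hn : 0 < n) (j : ℕ) (hj : 1 ≤ j) (ε : ℝ) (hε : 0 < ε)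
    (f g h : X → ℝ)
    (hf : Measurable f) (hg : Measurable g) (hh : Measurable h)
    (hfpos : ∀ x, 0 < f x) (hgpos : ∀ x, 0 < g x) (hhpos : ∀ x, 0 < h x)
    (hfint : Integrable (fun x => f x ^ (-n)) μ)
    (hgint : Integrable (fun x => g x ^ (-n)) μ)
    (hhint : Integrable (fun x => h x ^ (-n)) μ)
    (hfI : 0 < ∫ x, f x ^ (-n) ∂μ)
    (hgI : 0 < ∫ x, g x ^ (-n) ∂μ)
    (hhI : 0 < ∫ x, h x ^ (-n) ∂μ)
    (hae : ∀ᵐ x ∂μ, f x ^ (1 / (j : ℝ)) ≥ g x ^ (1 / (j : ℝ)) + ε * h x ^ (1 / (j : ℝ))) :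
    (∫ x, f x ^ (-n) ∂μ) ^ (-1 / (n * (j : ℝ))) ≥
      (∫ x, g x ^ (-n) ∂μ) ^ (-1 / (n * (j : ℝ))) +
        ε * (∫ x, h x ^ (-n) ∂μ) ^ (-1 / (n * (j : ℝ))) :=
  affine_quermassintegral_brunn_minkowski_general μ n hn j hj ε hε f g h hfpos hgpos hhpos hgint
    hhint hfI hgI hhI hae
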